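/- arXiv:2004.08869 — 5 statements merged into one kernel-verified Lean document; each statement's English description precedes it below -/
import Mathlib

section
/- Let R be a Noetherian domain and A a Krull domain containing R, and let π be a nonzero element of A with πA ≠ A. Then: (1) if A/P is a finitely generated R-algebra for every associated prime P of A/πA, then A/πA is a finitely generated R-algebra; (2) if A/P is a finite R-module for every associated prime P of A/πA, then A/πA is a finite R-module. -/
/-- The transcendence degree (as an extended natural number) of a ring extension given by a
ring homomorphism `f : R →+* A`: the supremum of the cardinalities of subsets of `A` that are
algebraically independent over `R`.  For an extension of integral domains with `f` injective,
this agrees with the transcendence degree of the induced extension of fraction fields. -/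
noncomputable def trdegHom {R A : Type*} [CommRing R] [CommRing A] (f : R →+* A) : ℕ∞ :=
  letI := f.toAlgebra
  Cardinal.toENat (⨆ s : {s : Set A // AlgebraicIndependent R ((↑) : s → A)}, Cardinal.mk s.1)

/-- The height of an ideal: the infimum of the heights of the prime ideals containing it.
For a prime ideal this is the usual height, i.e. the supremum of the lengths of chains of
primes descending from it. -/
noncomputable def idealHeight {A : Type*} [CommRing A] (I : Ideal A) : ℕ∞ :=
  ⨅ (P : PrimeSpectrum A) (_ : I ≤ P.asIdeal), Order.height P

/-- A Krull domain: an integral domain such that the localization at every height-one prime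
is a discrete valuation ring, `A` is the intersection of these localizations inside its
fraction field, and every nonzero element lies in only finitely many height-one primes. -/
def IsKrullDomain (A : Type*) [CommRing A] [IsDomain A] : Prop :=
  (∀ P : PrimeSpectrum A, Order.height P = 1 →
      IsDiscreteValuationRing (Localization.AtPrime P.asIdeal)) ∧
  (∀ x : FractionRing A,
      (∀ P : PrimeSpectrum A, Order.height P = 1 →
        ∃ a s : A, s ∉ P.asIdeal ∧
          algebraMap A (FractionRing A) s * x = algebraMap A (FractionRing A) a) →
      ∃ a : A, algebraMap A (FractionRing A) a = x) ∧
  (∀ a : A, a ≠ 0 → {P : PrimeSpectrum A | Order.height P = 1 ∧ a ∈ P.asIdeal}.Finite)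

universe u

/-- A Nagata (pseudo-geometric) ring: a Noetherian ring such that for every prime `p` and
every finite extension field `L` of the fraction field of `R ⧸ p`, the integral closure of
`R ⧸ p` in `L` is a finite `R ⧸ p`-module. -/
def IsNagataRing (R : Type u) [CommRing R] : Prop :=
  IsNoetherianRing R ∧
  ∀ (p : Ideal R) [p.IsPrime],
    ∀ (L : Type u) [Field L] [Algebra (R ⧸ p) L] [Algebra (FractionRing (R ⧸ p)) L]
      [IsScalarTower (R ⧸ p) (FractionRing (R ⧸ p)) L],
      FiniteDimensional (FractionRing (R ⧸ p)) L →
      Module.Finite (R ⧸ p) (integralClosure (R ⧸ p) L)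

/-!
For a Krull domain `A` and `π ≠ 0`, the ideal `πA` is the intersection of the symbolic powers
`Q⁽ᵉ⁽Q⁾⁾` over the finitely many height-one primes `Q ∋ π`, and every such `Q` is associated to
`A/πA`. Refining this intersection one symbolic power at a time gives a chain of ideals from `A`
down to `πA` whose layers `(K ∩ Q⁽ʲ⁾)/(K ∩ Q⁽ʲ⁺¹⁾)` are killed by `Q` and embed into `A/Q` via
`w ↦ d w / x`, where `v_Q(x) = j` and `d ∉ Q` has `v_{Q'}(d) ≥ v_{Q'}(x)` at every other height-one
prime, so that `x ∣ d w` because `A` is Krull. Since `A/Q` is a finitely generated algebra over the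
Noetherian ring `R`, it is Noetherian, so each layer is a finitely generated `A`-module, and then
finite generation over `R` (as an algebra or as a module) climbs the chain from `A/Q` and the
previous step.
-/

section QuotientGenerators

variable {R A : Type*} [CommRing R] [CommRing A] [Algebra R A]

theorem Submodule.map_mkₐ_eq_top_iff {I : Ideal A} {C : Submodule R A} :
    C.map (Ideal.Quotient.mkₐ R I).toLinearMap = ⊤ ↔ C ⊔ I.restrictScalars R = ⊤ := by
  set f := (Ideal.Quotient.mkₐ R I).toLinearMap
  have hf : Function.Surjective f := Ideal.Quotient.mkₐ_surjective R I
  have hker : LinearMap.ker f = I.restrictScalars R := by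
    ext a
    simp [f, Ideal.Quotient.eq_zero_iff_mem]
  rw [← hker, ← comap_map_eq]
  constructor
  · intro h
    rw [h, comap_top]
  · intro h
    rw [← map_comap_eq_of_surjective hf (C.map f), h, map_top, LinearMap.range_eq_top.2 hf]

theorem Set.exists_finite_iff_of_surjective {α β : Type*} {f : α → β} (hf : f.Surjective)
    {p : Set β → Prop} : (∃ t : Set β, t.Finite ∧ p t) ↔ ∃ s : Set α, s.Finite ∧ p (f '' s) := by
  simpa [Set.image_univ_of_surjective hf] using
    Set.exists_subset_image_finite_and (f := f) (s := Set.univ) (p := p)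

theorem Algebra.finiteType_quotient_iff {I : Ideal A} :
    Algebra.FiniteType R (A ⧸ I) ↔
      ∃ s : Set A, s.Finite ∧ Subalgebra.toSubmodule (adjoin R s) ⊔ I.restrictScalars R = ⊤ := by
  simp_rw [← Submodule.map_mkₐ_eq_top_iff, ← Subalgebra.map_toSubmodule, toSubmodule_eq_top,
    ← adjoin_image]
  have hfg : FiniteType R (A ⧸ I) ↔ (⊤ : Subalgebra R (A ⧸ I)).FG := ⟨fun h => h.out, fun h => ⟨h⟩⟩
  exact hfg.trans <| Subalgebra.fg_def.trans <|
    Set.exists_finite_iff_of_surjective (Ideal.Quotient.mkₐ_surjective R I)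

theorem Module.finite_quotient_iff {I : Ideal A} :
    Module.Finite R (A ⧸ I) ↔
      ∃ s : Set A, s.Finite ∧ Submodule.span R s ⊔ I.restrictScalars R = ⊤ := by
  simp_rw [← Submodule.map_mkₐ_eq_top_iff, Submodule.map_span]
  exact Module.finite_def.trans <| Submodule.fg_def.trans <|
    Set.exists_finite_iff_of_surjective (Ideal.Quotient.mkₐ_surjective R I)

end QuotientGenerators

section Devissage

open scoped Pointwise

variable {R A : Type*} [CommRing R] [CommRing A] [Algebra R A]

/-- `C ⊔ I.restrictScalars R = ⊤` says that `C` contains representatives of all classes of `A ⧸ I`.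
Representatives of `A ⧸ J` are then obtained from those of `A ⧸ I` and the products of those of
`A ⧸ P` with the generators `g` of `I / J`. -/
theorem Submodule.sup_restrictScalars_eq_top_of_mul_le {C₁ C₂ C : Submodule R A}
    {I J P : Ideal A} {g : Set A} (hgI : g ⊆ I) (hIg : I ≤ Ideal.span g ⊔ J) (hPI : P * I ≤ J)
    (hC₁ : C₁ ⊔ I.restrictScalars R = ⊤) (hC₂ : C₂ ⊔ P.restrictScalars R = ⊤) (h₁ : C₁ ≤ C)
    (h₂ : C₂ * span R g ≤ C) : C ⊔ J.restrictScalars R = ⊤ := by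
  have hspan : ∀ i ∈ Ideal.span g, ∀ a : A, a * i ∈ C ⊔ J.restrictScalars R := by
    intro i hi
    induction hi using Submodule.span_induction with
    | mem y hy =>
      intro a
      obtain ⟨c, hc, p, hp, rfl⟩ := mem_sup.1 (hC₂.symm ▸ mem_top : a ∈ C₂ ⊔ P.restrictScalars R)
      rw [add_mul]
      exact add_mem (mem_sup_left (h₂ (mul_mem_mul hc (subset_span hy))))
        (mem_sup_right (hPI (Ideal.mul_mem_mul hp (hgI hy))))
    | zero => simp
    | add x y _ _ hx hy => exact fun a => by rw [mul_add]; exact add_mem (hx a) (hy a)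
    | smul b x _ hx => exact fun a => by rw [smul_eq_mul, ← mul_assoc]; exact hx (a * b)
  refine eq_top_iff.2 fun a _ => ?_
  obtain ⟨c, hc, i, hi, rfl⟩ := mem_sup.1 (hC₁.symm ▸ mem_top : a ∈ C₁ ⊔ I.restrictScalars R)
  obtain ⟨s, hs, j, hj, rfl⟩ := mem_sup.1 (hIg hi)
  refine add_mem (mem_sup_left (h₁ hc)) (add_mem ?_ (mem_sup_right hj))
  simpa using hspan s hs 1

theorem Algebra.FiniteType.quotient_of_mul_le {I J P : Ideal A} {g : Set A} (hg : g.Finite)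
    (hgI : g ⊆ I) (hIg : I ≤ Ideal.span g ⊔ J) (hPI : P * I ≤ J)
    (hI : FiniteType R (A ⧸ I)) (hP : FiniteType R (A ⧸ P)) : FiniteType R (A ⧸ J) := by
  obtain ⟨s, hs, hsI⟩ := finiteType_quotient_iff.1 hI
  obtain ⟨t, ht, htP⟩ := finiteType_quotient_iff.1 hP
  refine finiteType_quotient_iff.2 ⟨s ∪ t ∪ g, (hs.union ht).union hg,
    Submodule.sup_restrictScalars_eq_top_of_mul_le hgI hIg hPI hsI htP
      (adjoin_mono (by grind)) ?_⟩
  rw [Submodule.mul_le]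
  intro c hc y hy
  refine Subalgebra.mul_mem _ (adjoin_mono (by grind) hc) ?_
  exact (span_le_adjoin R g).trans (Subalgebra.toSubmodule.monotone (adjoin_mono (by grind))) hy

theorem Module.Finite.quotient_of_mul_le {I J P : Ideal A} {g : Set A} (hg : g.Finite)
    (hgI : g ⊆ I) (hIg : I ≤ Ideal.span g ⊔ J) (hPI : P * I ≤ J)
    (hI : Module.Finite R (A ⧸ I)) (hP : Module.Finite R (A ⧸ P)) : Module.Finite R (A ⧸ J) := by
  obtain ⟨s, hs, hsI⟩ := finite_quotient_iff.1 hI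
  obtain ⟨t, ht, htP⟩ := finite_quotient_iff.1 hP
  refine finite_quotient_iff.2 ⟨s ∪ t * g, hs.union (ht.mul hg),
    Submodule.sup_restrictScalars_eq_top_of_mul_le hgI hIg hPI hsI htP
      (Submodule.span_mono Set.subset_union_left) ?_⟩
  rw [Submodule.span_mul_span]
  exact Submodule.span_mono Set.subset_union_right

end Devissage

section NoetherianLayer

variable {A : Type*} [CommRing A]

theorem Ideal.exists_finite_subset_le_span_sup {P : Ideal A} [IsNoetherianRing (A ⧸ P)]
    (W : Ideal A) : ∃ G : Set A, G.Finite ∧ G ⊆ W ∧ W ≤ span G ⊔ P := by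
  have hf : Function.Surjective (Quotient.mk P) := Quotient.mk_surjective
  obtain ⟨S, hS, hSW⟩ := Submodule.fg_def.1 (IsNoetherian.noetherian (W.map (Quotient.mk P)))
  have hSW' : S ⊆ Quotient.mk P '' W := fun v hv =>
    (mem_map_iff_of_surjective _ hf).1 (hSW ▸ Submodule.subset_span hv)
  obtain ⟨G, hGW, hG, hGS⟩ := (Set.exists_subset_image_finite_and
    (p := fun S => span S = W.map (Quotient.mk P))).1 ⟨S, hSW', hS, hSW⟩
  refine ⟨G, hG, hGW, ?_⟩
  rw [← mk_ker (I := P), RingHom.ker_eq_comap_bot, ← comap_map_of_surjective _ hf, map_span, hGS]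
  exact le_comap_map

/-- `w ↦ d * w / x` maps `I / J` injectively into the Noetherian `A / P`. -/
theorem Ideal.exists_finite_subset_le_span_sup_of_dvd {I J P : Ideal A}
    [IsNoetherianRing (A ⧸ P)] {x d : A} (hdvd : ∀ w ∈ I, x ∣ d * w)
    (hker : ∀ w ∈ I, ∀ p ∈ P, d * w = x * p → w ∈ J) :
    ∃ g : Set A, g.Finite ∧ g ⊆ I ∧ I ≤ span g ⊔ J := by
  obtain ⟨G, hG, hGW, hW⟩ := exists_finite_subset_le_span_sup (P := P)
    ((span {d} * I).colon (span {x}))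
  have hy : ∀ z ∈ G, ∃ y ∈ I, d * y = z * x := fun z hz =>
    mem_span_singleton_mul.1 (mem_colon_span_singleton.1 (hGW hz))
  choose! y hyI hy using hy
  have hlift : ∀ s ∈ span G, ∃ t ∈ span (y '' G), s * x = d * t := by
    intro s hs
    induction hs using Submodule.span_induction with
    | mem z hz => exact ⟨y z, subset_span ⟨z, hz, rfl⟩, (hy z hz).symm⟩
    | zero => exact ⟨0, zero_mem _, by simp⟩
    | add s s' _ _ hs hs' =>
      obtain ⟨t, ht, hst⟩ := hs
      obtain ⟨t', ht', hst'⟩ := hs'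
      exact ⟨t + t', add_mem ht ht', by rw [add_mul, hst, hst', mul_add]⟩
    | smul a s _ hs =>
      obtain ⟨t, ht, hst⟩ := hs
      exact ⟨a * t, mul_mem_left _ a ht, by rw [smul_eq_mul, mul_assoc, hst]; ring⟩
  refine ⟨y '' G, hG.image y, Set.image_subset_iff.2 hyI, fun w hw => ?_⟩
  obtain ⟨z, hz⟩ := hdvd w hw
  have hzW : z ∈ (span {d} * I).colon (span {x}) :=
    mem_colon_span_singleton.2 (mem_span_singleton_mul.2 ⟨w, hw, by rw [hz, mul_comm]⟩)
  obtain ⟨s, hs, p, hp, rfl⟩ := Submodule.mem_sup.1 (hW hzW)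
  obtain ⟨t, ht, hst⟩ := hlift s hs
  have htI : t ∈ I := span_le.2 (Set.image_subset_iff.2 hyI) ht
  have hwt : w - t ∈ J := hker _ (sub_mem hw htI) p hp (by linear_combination hz + hst)
  exact Submodule.mem_sup.2 ⟨t, ht, w - t, hwt, add_sub_cancel t w⟩

end NoetherianLayer

namespace PrimeSpectrum

variable {A : Type*} [CommRing A] (Q : PrimeSpectrum A)

def symbolicPow (n : ℕ) : Ideal A :=
  (IsLocalRing.maximalIdeal (Localization.AtPrime Q.asIdeal) ^ n).comap
    (algebraMap A (Localization.AtPrime Q.asIdeal))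

theorem symbolicPow_zero : Q.symbolicPow 0 = ⊤ := by
  simp [symbolicPow]

theorem symbolicPow_antitone : Antitone Q.symbolicPow := fun _ _ h =>
  Ideal.comap_mono (Ideal.pow_le_pow_right h)

theorem symbolicPow_one : Q.symbolicPow 1 = Q.asIdeal := by
  simpa [symbolicPow] using Localization.AtPrime.under_maximalIdeal (I := Q.asIdeal)

theorem eq_zero_of_mem_symbolicPow {a : A} (ha : a ∉ Q.asIdeal) {n : ℕ}
    (hn : a ∈ Q.symbolicPow n) : n = 0 := by
  by_contra h
  exact ha (Q.symbolicPow_one ▸ Q.symbolicPow_antitone (Nat.one_le_iff_ne_zero.2 h) hn)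

theorem mul_mem_symbolicPow {a b : A} {m n : ℕ} (ha : a ∈ Q.symbolicPow m)
    (hb : b ∈ Q.symbolicPow n) : a * b ∈ Q.symbolicPow (m + n) := by
  simp only [symbolicPow, Ideal.mem_comap, map_mul, pow_add] at *
  exact Ideal.mul_mem_mul ha hb

theorem mul_inf_symbolicPow_le (K : Ideal A) (n : ℕ) :
    Q.asIdeal * (K ⊓ Q.symbolicPow n) ≤ K ⊓ Q.symbolicPow (n + 1) :=
  Ideal.mul_le.2 fun _ hr _ hs => ⟨K.mul_mem_left _ hs.1,
    add_comm 1 n ▸ Q.mul_mem_symbolicPow (Q.symbolicPow_one ▸ hr) hs.2⟩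

theorem pow_mem_symbolicPow {a : A} (ha : a ∈ Q.asIdeal) (n : ℕ) : a ^ n ∈ Q.symbolicPow n := by
  refine Ideal.mem_comap.2 ?_
  rw [map_pow]
  refine Ideal.pow_mem_pow ?_ n
  rw [← Localization.AtPrime.under_maximalIdeal (I := Q.asIdeal)] at ha
  exact ha

section DVR

variable [IsDomain A] [IsDiscreteValuationRing (Localization.AtPrime Q.asIdeal)]

noncomputable def ord (a : A) : ℕ∞ :=
  IsDiscreteValuationRing.addVal _ (algebraMap A (Localization.AtPrime Q.asIdeal) a)

theorem ord_mul (a b : A) : Q.ord (a * b) = Q.ord a + Q.ord b := by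
  simp [ord]

theorem ord_pow (a : A) (n : ℕ) : Q.ord (a ^ n) = n * Q.ord a := by
  simp [ord]

theorem ord_ne_top {a : A} (ha : a ≠ 0) : Q.ord a ≠ ⊤ := by
  rw [ord, Ne, IsDiscreteValuationRing.addVal_eq_top_iff,
    map_eq_zero_iff _ (IsLocalization.injective _ Q.asIdeal.primeCompl_le_nonZeroDivisors)]
  exact ha

theorem ord_eq_zero_iff {a : A} : Q.ord a = 0 ↔ a ∉ Q.asIdeal := by
  rw [ord, IsDiscreteValuationRing.addVal_eq_zero_iff,
    IsLocalization.AtPrime.isUnit_to_map_iff _ Q.asIdeal]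
  rfl

theorem exists_ord_eq_one : ∃ t : A, Q.ord t = 1 := by
  obtain ⟨ϖ, hϖ⟩ := IsDiscreteValuationRing.exists_irreducible (Localization.AtPrime Q.asIdeal)
  obtain ⟨⟨t, s⟩, hts⟩ := IsLocalization.surj Q.asIdeal.primeCompl ϖ
  refine ⟨t, ?_⟩
  rw [ord, ← hts, IsDiscreteValuationRing.addVal_mul, IsDiscreteValuationRing.addVal_uniformizer hϖ,
    (IsDiscreteValuationRing.addVal_eq_zero_iff).2 (IsLocalization.map_units _ s), add_zero]

theorem mem_symbolicPow_iff {a : A} {n : ℕ} : a ∈ Q.symbolicPow n ↔ (n : ℕ∞) ≤ Q.ord a := by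
  obtain ⟨ϖ, hϖ⟩ := IsDiscreteValuationRing.exists_irreducible (Localization.AtPrime Q.asIdeal)
  rw [symbolicPow, Ideal.mem_comap, hϖ.maximalIdeal_eq, Ideal.span_singleton_pow,
    Ideal.mem_span_singleton, ord, ← IsDiscreteValuationRing.addVal_le_iff_dvd,
    IsDiscreteValuationRing.addVal_pow, IsDiscreteValuationRing.addVal_uniformizer hϖ, nsmul_one]

theorem one_le_ord_iff {a : A} : 1 ≤ Q.ord a ↔ a ∈ Q.asIdeal := by
  rw [← Nat.cast_one, ← mem_symbolicPow_iff, symbolicPow_one]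

theorem exists_mul_eq_mul_of_ord_le {a b : A} (h : Q.ord b ≤ Q.ord a) :
    ∃ s ∉ Q.asIdeal, ∃ c : A, s * a = c * b := by
  obtain ⟨z, hz⟩ := (IsDiscreteValuationRing.addVal_le_iff_dvd).1 h
  obtain ⟨⟨c, s⟩, hcs⟩ := IsLocalization.surj Q.asIdeal.primeCompl z
  refine ⟨s, s.2, c, IsLocalization.injective (Localization.AtPrime Q.asIdeal)
    Q.asIdeal.primeCompl_le_nonZeroDivisors ?_⟩
  simp only [map_mul] at hz ⊢
  rw [hz, ← hcs]
  ring

end DVR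

end PrimeSpectrum

theorem Order.eq_of_le_of_height_eq {α : Type*} [PartialOrder α] {x y : α} (hxy : x ≤ y)
    (h : Order.height x = Order.height y) (hx : Order.height x ≠ ⊤) : x = y := by
  by_contra hne
  exact (Order.height_strictMono (hxy.lt_of_ne hne) hx.lt_top).ne h

namespace IsKrullDomain

open PrimeSpectrum

variable {A : Type*} [CommRing A] [IsDomain A]

theorem dvd_of_forall_mem_symbolicPow (hA : IsKrullDomain A) {a b : A} (hb : b ≠ 0)
    (h : ∀ Q : PrimeSpectrum A, Order.height Q = 1 →
      ∀ n, b ∈ Q.symbolicPow n → a ∈ Q.symbolicPow n) : b ∣ a := by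
  set g := algebraMap A (FractionRing A)
  have hg : Function.Injective g := IsFractionRing.injective A (FractionRing A)
  have hgb : g b ≠ 0 := (map_ne_zero_iff g hg).2 hb
  obtain ⟨c, hc⟩ := hA.2.1 (g a / g b) fun Q hQ => by
    have := hA.1 Q hQ
    obtain ⟨n, hn⟩ := ENat.ne_top_iff_exists.1 (Q.ord_ne_top hb)
    have hle : Q.ord b ≤ Q.ord a := by
      rw [← hn, ← Q.mem_symbolicPow_iff]
      exact h Q hQ n (Q.mem_symbolicPow_iff.2 hn.le)
    obtain ⟨s, hs, c, hsc⟩ := Q.exists_mul_eq_mul_of_ord_le hle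
    refine ⟨c, s, hs, ?_⟩
    rw [mul_div_assoc', div_eq_iff hgb, ← map_mul, ← map_mul, hsc]
  exact ⟨c, hg (by rw [map_mul, hc, mul_div_cancel₀ _ hgb])⟩

theorem exists_notMem_forall_mem_symbolicPow (hA : IsKrullDomain A) {Q : PrimeSpectrum A}
    (hQ : Order.height Q = 1) {x : A} (hx : x ≠ 0) :
    ∃ d ∉ Q.asIdeal, ∀ Q' : PrimeSpectrum A, Order.height Q' = 1 → Q' ≠ Q →
      ∀ n, x ∈ Q'.symbolicPow n → d ∈ Q'.symbolicPow n := by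
  classical
  set T := (hA.2.2 x hx).toFinset.erase Q
  have hT : ∀ Q', Q' ∈ T ↔ Q' ≠ Q ∧ Order.height Q' = 1 ∧ x ∈ Q'.asIdeal := by simp [T]
  have hq : ∀ Q' ∈ T, ∃ q ∉ Q.asIdeal, ∀ n, x ∈ Q'.symbolicPow n → q ∈ Q'.symbolicPow n := by
    intro Q' hQ'
    obtain ⟨hne, hQ'1, -⟩ := (hT Q').1 hQ'
    have := hA.1 Q' hQ'1
    have hQ'Q : ¬Q'.asIdeal ≤ Q.asIdeal := fun hle =>
      hne (Order.eq_of_le_of_height_eq (show Q' ≤ Q from hle) (hQ'1.trans hQ.symm) (by simp [hQ'1]))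
    obtain ⟨q, hqQ', hqQ⟩ := SetLike.not_le_iff_exists.1 hQ'Q
    obtain ⟨N, hN⟩ := ENat.ne_top_iff_exists.1 (Q'.ord_ne_top hx)
    refine ⟨q ^ N, fun h => hqQ (Q.isPrime.mem_of_pow_mem _ h), fun n hn => ?_⟩
    rw [Q'.mem_symbolicPow_iff, ← hN, Nat.cast_le] at hn
    exact Q'.symbolicPow_antitone hn (Q'.pow_mem_symbolicPow hqQ' N)
  choose! q hqQ hq using hq
  refine ⟨∏ Q' ∈ T, q Q', fun h => ?_, fun Q' hQ' hne n hn => ?_⟩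
  · obtain ⟨Q', hQ', hmem⟩ := Ideal.IsPrime.prod_mem_iff.1 h
    exact hqQ Q' hQ' hmem
  · by_cases hxQ' : x ∈ Q'.asIdeal
    · have hQ'T := (hT Q').2 ⟨hne, hQ', hxQ'⟩
      exact Ideal.mem_of_dvd _ (Finset.dvd_prod_of_mem q hQ'T) (hq Q' hQ'T n hn)
    · rw [Q'.eq_zero_of_mem_symbolicPow hxQ' hn, symbolicPow_zero]
      trivial

theorem exists_span_singleton_eq_finset_inf (hA : IsKrullDomain A) {π : A} (hπ : π ≠ 0) :
    ∃ (S : Finset (PrimeSpectrum A)) (e : PrimeSpectrum A → ℕ),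
      (∀ Q ∈ S, Order.height Q = 1 ∧ π ∈ Q.asIdeal) ∧
        Ideal.span {π} = S.inf fun Q => Q.symbolicPow (e Q) := by
  set S := (hA.2.2 π hπ).toFinset
  have hS : ∀ Q, Q ∈ S ↔ Order.height Q = 1 ∧ π ∈ Q.asIdeal := by simp [S]
  have he : ∀ Q ∈ S, ∃ e : ℕ, ∀ n : ℕ, π ∈ Q.symbolicPow n ↔ n ≤ e := by
    intro Q hQ
    have := hA.1 Q ((hS Q).1 hQ).1
    obtain ⟨e, he⟩ := ENat.ne_top_iff_exists.1 (Q.ord_ne_top hπ)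
    exact ⟨e, fun n => by rw [Q.mem_symbolicPow_iff, ← he, Nat.cast_le]⟩
  choose! e he using he
  refine ⟨S, e, fun Q hQ => (hS Q).1 hQ, le_antisymm ?_ fun a ha => ?_⟩
  · rw [Ideal.span_singleton_le_iff_mem, Submodule.mem_finsetInf]
    exact fun Q hQ => (he Q hQ _).2 le_rfl
  · rw [Submodule.mem_finsetInf] at ha
    refine Ideal.mem_span_singleton.2 (hA.dvd_of_forall_mem_symbolicPow hπ fun Q hQ n hn => ?_)
    by_cases hπQ : π ∈ Q.asIdeal
    · have hQS := (hS Q).2 ⟨hQ, hπQ⟩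
      exact Q.symbolicPow_antitone ((he Q hQS n).1 hn) (ha Q hQS)
    · rw [Q.eq_zero_of_mem_symbolicPow hπQ hn, symbolicPow_zero]
      trivial

theorem mem_associatedPrimes (hA : IsKrullDomain A) {π : A} (hπ : π ≠ 0) {Q : PrimeSpectrum A}
    (hQ : Order.height Q = 1) (hπQ : π ∈ Q.asIdeal) :
    Q.asIdeal ∈ associatedPrimes A (A ⧸ Ideal.span {π}) := by
  have := hA.1 Q hQ
  obtain ⟨e, he⟩ : ∃ e : ℕ, Q.ord π = 1 + e := by
    obtain ⟨m, hm⟩ := ENat.ne_top_iff_exists.1 (Q.ord_ne_top hπ)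
    have hm0 : m ≠ 0 := by
      rintro rfl
      exact Q.ord_eq_zero_iff.1 hm.symm hπQ
    exact ⟨m - 1, by rw [← hm]; norm_cast; omega⟩
  obtain ⟨t, ht⟩ := Q.exists_ord_eq_one
  obtain ⟨d, hdQ, hd⟩ := hA.exists_notMem_forall_mem_symbolicPow hQ hπ
  -- `t ^ e * d` has valuation `v_Q(π) - 1` at `Q` and at least `v_{Q'}(π)` at every other `Q'`.
  have hy : Q.ord (t ^ e * d) = e := by
    rw [ord_mul, ord_pow, ht, Q.ord_eq_zero_iff.2 hdQ, mul_one, add_zero]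
  have hcolon : ∀ b : A, b * (t ^ e * d) ∈ Ideal.span {π} ↔ b ∈ Q.asIdeal := by
    intro b
    rw [Ideal.mem_span_singleton, ← Q.one_le_ord_iff,
      ← ENat.add_le_add_iff_right (ENat.natCast_ne_top e), ← he, ← hy, ← ord_mul]
    constructor
    · rintro ⟨c, hc⟩
      rw [hc, ord_mul]
      exact le_self_add
    · intro hle
      refine hA.dvd_of_forall_mem_symbolicPow hπ fun Q' hQ' n hn => ?_
      by_cases hQQ' : Q' = Q
      · subst hQQ'
        rw [Q'.mem_symbolicPow_iff] at hn ⊢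
        exact hn.trans hle
      · exact Ideal.mul_mem_left _ _ (Ideal.mul_mem_left _ _ (hd Q' hQ' hQQ' n hn))
  refine ⟨Q.isPrime, Ideal.Quotient.mk _ (t ^ e * d), ?_⟩
  suffices h : (⊥ : Submodule A (A ⧸ Ideal.span {π})).colon {Ideal.Quotient.mk _ (t ^ e * d)} =
      Q.asIdeal by rw [h, Q.isPrime.radical]
  ext b
  rw [Submodule.mem_colon_singleton, Submodule.mem_bot, Algebra.smul_def,
    Ideal.Quotient.algebraMap_eq, ← map_mul, Ideal.Quotient.eq_zero_iff_mem, hcolon]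

theorem exists_finite_le_span_sup_inf_symbolicPow (hA : IsKrullDomain A) {Q : PrimeSpectrum A}
    (hQ : Order.height Q = 1) [IsNoetherianRing (A ⧸ Q.asIdeal)] (K : Ideal A) (j : ℕ) :
    ∃ g : Set A, g.Finite ∧ g ⊆ ↑(K ⊓ Q.symbolicPow j) ∧
      K ⊓ Q.symbolicPow j ≤ Ideal.span g ⊔ K ⊓ Q.symbolicPow (j + 1) := by
  have := hA.1 Q hQ
  obtain ⟨t, ht⟩ := Q.exists_ord_eq_one
  have hx : Q.ord (t ^ j) = j := by rw [ord_pow, ht, mul_one]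
  have hx0 : t ^ j ≠ 0 := fun h => by simp [ord, h] at hx
  obtain ⟨d, hdQ, hd⟩ := hA.exists_notMem_forall_mem_symbolicPow hQ hx0
  refine Ideal.exists_finite_subset_le_span_sup_of_dvd (P := Q.asIdeal) (x := t ^ j) (d := d)
    (fun w hw => ?_) fun w hw p hp hwp => ?_
  · refine hA.dvd_of_forall_mem_symbolicPow hx0 fun Q' hQ' n hn => ?_
    by_cases hQQ' : Q' = Q
    · subst hQQ'
      rw [Q'.mem_symbolicPow_iff, hx, Nat.cast_le] at hn
      exact Ideal.mul_mem_left _ _ (Q'.symbolicPow_antitone hn hw.2)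
    · exact Ideal.mul_mem_right _ _ (hd Q' hQ' hQQ' n hn)
  · refine Ideal.mem_inf.2 ⟨hw.1, ?_⟩
    rw [Q.mem_symbolicPow_iff, ← zero_add (Q.ord w), ← Q.ord_eq_zero_iff.2 hdQ, ← ord_mul, hwp,
      ord_mul, hx, Nat.cast_add, Nat.cast_one]
    exact add_le_add_right (Q.one_le_ord_iff.2 hp) _

theorem induction_span_singleton (hA : IsKrullDomain A) {π : A} (hπ : π ≠ 0)
    (p : Ideal A → Prop) (top : p ⊤) (noetherian : ∀ P, p P → IsNoetherianRing (A ⧸ P))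
    (extension : ∀ {I J P : Ideal A} {g : Set A}, g.Finite → g ⊆ I → I ≤ Ideal.span g ⊔ J →
      P * I ≤ J → p I → p P → p J)
    (associated : ∀ P ∈ associatedPrimes A (A ⧸ Ideal.span {π}), p P) :
    p (Ideal.span {π}) := by
  classical
  obtain ⟨S, e, hS, hπS⟩ := hA.exists_span_singleton_eq_finset_inf hπ
  rw [hπS]
  clear hπS
  induction S using Finset.induction_on with
  | empty => simpa using top
  | insert Q S _ ih =>
    obtain ⟨hQ, hπQ⟩ := hS Q (Finset.mem_insert_self Q S)
    have hpQ := associated _ (hA.mem_associatedPrimes hπ hQ hπQ)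
    have := noetherian _ hpQ
    rw [Finset.inf_insert, inf_comm]
    induction e Q with
    | zero => simpa [symbolicPow_zero] using ih fun Q' hQ' => hS Q' (Finset.mem_insert_of_mem hQ')
    | succ j ihj =>
      obtain ⟨g, hg, hgI, hIg⟩ := hA.exists_finite_le_span_sup_inf_symbolicPow hQ (S.inf _) j
      exact extension hg hgI hIg (Q.mul_inf_symbolicPow_le _ j) ihj hpQ

end IsKrullDomain

theorem quotient_span_finiteType_of_quotient_associatedPrimes_general
    (R A : Type u) [CommRing R] [IsNoetherianRing R]
    [CommRing A] [IsDomain A] [Algebra R A]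
    (hKrull : IsKrullDomain A)
    (π : A) (hπ0 : π ≠ 0) :
    ((∀ P ∈ associatedPrimes A (A ⧸ Ideal.span {π}), Algebra.FiniteType R (A ⧸ P)) →
      Algebra.FiniteType R (A ⧸ Ideal.span {π})) ∧
    ((∀ P ∈ associatedPrimes A (A ⧸ Ideal.span {π}), Module.Finite R (A ⧸ P)) →
      Module.Finite R (A ⧸ Ideal.span {π})) := by
  refine ⟨hKrull.induction_span_singleton hπ0 (fun I => Algebra.FiniteType R (A ⧸ I)) ?_
    (fun P _ => Algebra.FiniteType.isNoetherianRing R _) Algebra.FiniteType.quotient_of_mul_le,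
    hKrull.induction_span_singleton hπ0 (fun I => Module.Finite R (A ⧸ I)) ?_
    (fun P _ => Algebra.FiniteType.isNoetherianRing R _) Module.Finite.quotient_of_mul_le⟩
  · exact Algebra.finiteType_quotient_iff.2 ⟨∅, Set.finite_empty, by simp⟩
  · exact Module.finite_quotient_iff.2 ⟨∅, Set.finite_empty, by simp⟩

/-- Lemma 3.7: finite generation (resp. finiteness) of `A/πA` from that of the `A/P` for the
associated primes `P` of `A/πA`, for a Krull domain `A` over a Noetherian domain `R`. -/
theorem quotient_span_finiteType_of_quotient_associatedPrimes
    (R A : Type u) [CommRing R] [IsDomain R] [IsNoetherianRing R]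
    [CommRing A] [IsDomain A] [Algebra R A]
    (hinj : Function.Injective (algebraMap R A))
    (hKrull : IsKrullDomain A)
    (π : A) (hπ0 : π ≠ 0) (hπ1 : Ideal.span {π} ≠ ⊤) :
    ((∀ P ∈ associatedPrimes A (A ⧸ Ideal.span {π}), Algebra.FiniteType R (A ⧸ P)) →
      Algebra.FiniteType R (A ⧸ Ideal.span {π})) ∧
    ((∀ P ∈ associatedPrimes A (A ⧸ Ideal.span {π}), Module.Finite R (A ⧸ P)) →
      Module.Finite R (A ⧸ Ideal.span {π})) :=
  quotient_span_finiteType_of_quotient_associatedPrimes_general R A hKrull π hπ0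
end

section
/- Let (S, n) be a one-dimensional local domain and B an integral domain containing S such that nB = B and trdeg_S B = 0. Then B is a field. -/
universe u

/-!
Every element of `B` is algebraic over `S`, so every nonzero ideal of `B` contains a nonzero
element of `S` (the constant term of a relation of a nonzero element, after cancelling powers of
it). On the other hand a prime of `B` contracts to a prime of `S` different from `n`, because
`nB = B`, hence to `0`, because `dim S = 1`. So `0` is the only prime ideal of `B`.
-/

theorem trdegHom_algebraMap (R A : Type*) [CommRing R] [CommRing A] [Algebra R A] :
    trdegHom (algebraMap R A) = (Algebra.trdeg R A).toENat := by
  rw [trdegHom, Algebra.algebra_ext (algebraMap R A).toAlgebra ‹_› fun _ ↦ rfl]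
  rfl

theorem trdegHom_algebraMap_eq_zero_iff {R A : Type*} [CommRing R] [CommRing A] [Algebra R A] :
    trdegHom (algebraMap R A) = 0 ↔ Algebra.IsAlgebraic R A := by
  rw [trdegHom_algebraMap, Cardinal.toENat_eq_zero, trdeg_eq_zero_iff]

theorem Ideal.eq_bot_of_comap_eq_bot_of_isAlgebraic {R B : Type*} [CommRing R] [CommRing B]
    [IsDomain B] [Algebra R B] [Algebra.IsAlgebraic R B] {I : Ideal B}
    (hI : I.comap (algebraMap R B) = ⊥) : I = ⊥ := by
  by_contra hne
  obtain ⟨b, hbI, hb⟩ := Submodule.exists_mem_ne_zero_of_ne_bot hne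
  exact comap_ne_bot_of_algebraic_mem hb hbI (Algebra.IsAlgebraic.isAlgebraic b) hI

theorem IsLocalRing.eq_bot_of_isPrime_of_ne_maximalIdeal {S : Type*} [CommRing S] [IsDomain S]
    [IsLocalRing S] [Ring.KrullDimLE 1 S] {p : Ideal S} (hp : p.IsPrime)
    (hm : p ≠ maximalIdeal S) : p = ⊥ := by
  by_contra h
  exact hm (eq_maximalIdeal (hp.isMaximal_of_ne_bot h))

theorem Ideal.comap_eq_bot_of_map_maximalIdeal_eq_top {S B : Type*} [CommRing S] [IsDomain S]
    [IsLocalRing S] [Ring.KrullDimLE 1 S] [CommRing B] (f : S →+* B)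
    (hf : (IsLocalRing.maximalIdeal S).map f = ⊤) {P : Ideal B} (hP : P.IsPrime) :
    P.comap f = ⊥ := by
  refine IsLocalRing.eq_bot_of_isPrime_of_ne_maximalIdeal (hP.comap f) fun h ↦ hP.ne_top ?_
  rw [eq_top_iff, ← hf, ← h]
  exact map_comap_le

theorem isField_of_trdeg_zero_of_map_maximalIdeal_eq_top_general
    (S B : Type u) [CommRing S] [IsDomain S] [IsLocalRing S]
    (hdim : ringKrullDim S = 1)
    [CommRing B] [IsDomain B] [Algebra S B]
    (hnB : Ideal.map (algebraMap S B) (IsLocalRing.maximalIdeal S) = ⊤)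
    (htr : trdegHom (algebraMap S B) = 0) :
    IsField B := by
  have : Ring.KrullDimLE 1 S := Ring.krullDimLE_iff.mpr hdim.le
  have : Algebra.IsAlgebraic S B := trdegHom_algebraMap_eq_zero_iff.mp htr
  obtain ⟨M, hM⟩ := Ideal.exists_maximal B
  have hM_bot : M = ⊥ := Ideal.eq_bot_of_comap_eq_bot_of_isAlgebraic
    (Ideal.comap_eq_bot_of_map_maximalIdeal_eq_top _ hnB hM.isPrime)
  exact Ring.isField_iff_maximal_bot.mpr (hM_bot ▸ hM)

/-- Lemma 3.12: a domain of transcendence degree zero over a one-dimensional local domain,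
in which the maximal ideal generates the unit ideal, is a field. -/
theorem isField_of_trdeg_zero_of_map_maximalIdeal_eq_top
    (S B : Type u) [CommRing S] [IsDomain S] [IsLocalRing S]
    (hdim : ringKrullDim S = 1)
    [CommRing B] [IsDomain B] [Algebra S B]
    (hinj : Function.Injective (algebraMap S B))
    (hnB : Ideal.map (algebraMap S B) (IsLocalRing.maximalIdeal S) = ⊤)
    (htr : trdegHom (algebraMap S B) = 0) :
    IsField B :=
  isField_of_trdeg_zero_of_map_maximalIdeal_eq_top_general S B hdim hnB htr
end

section
/- Let (R, m) be a two-dimensional local domain and A a Krull domain with R ⊆ A, mA = A, and trdeg_R A > 0. Let π be a nonzero element of m and let P be a minimal prime ideal of πA. Suppose that trdeg_{R/(P∩R)} A/P = 0. Then A/P is a field. -/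
universe u

theorem Ideal.comap_lt_comap_of_isAlgebraic_quotient {R A : Type*} [CommRing R] [CommRing A]
    [Algebra R A] {P Q : Ideal A} [P.IsPrime]
    [Algebra.IsAlgebraic (R ⧸ P.comap (algebraMap R A)) (A ⧸ P)] (hPQ : P < Q) :
    P.comap (algebraMap R A) < Q.comap (algebraMap R A) := by
  obtain ⟨x, hxQ, hxP⟩ := SetLike.exists_of_lt hPQ
  have hx0 : Ideal.Quotient.mk P x ≠ 0 := by rwa [Ne, Ideal.Quotient.eq_zero_iff_mem]
  obtain ⟨y, hyQ, hy0⟩ := Submodule.exists_mem_ne_zero_of_ne_bot <|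
    Ideal.comap_ne_bot_of_algebraic_mem hx0 (Ideal.mem_map_of_mem _ hxQ)
      (Algebra.IsAlgebraic.isAlgebraic (R := R ⧸ P.comap (algebraMap R A)) _)
  obtain ⟨r, rfl⟩ := Ideal.Quotient.mk_surjective y
  refine SetLike.lt_iff_le_and_exists.2 ⟨Ideal.comap_mono hPQ.le, r, ?_, ?_⟩
  · exact (Ideal.mem_quotient_iff_mem hPQ.le).1 hyQ
  · rwa [Ne, Ideal.Quotient.eq_zero_iff_mem] at hy0

theorem IsLocalRing.eq_maximalIdeal_of_lt_of_lt {R : Type*} [CommRing R] [IsLocalRing R]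
    (hdim : ringKrullDim R ≤ 2) {p q r : Ideal R} [p.IsPrime] [q.IsPrime] [hr : r.IsPrime]
    (hpq : p < q) (hqr : q < r) : r = maximalIdeal R := by
  by_contra hrm
  have hrm : (⟨r, hr⟩ : PrimeSpectrum R) < closedPoint R :=
    (le_maximalIdeal hr.ne_top).lt_of_ne hrm
  have h1 : 1 < Order.height (⟨r, hr⟩ : PrimeSpectrum R) :=
    Order.one_lt_height_iff.2 ⟨⟨q, ‹_›⟩, ⟨p, ‹_›⟩, hpq, hqr⟩
  have h3 : (3 : ℕ∞) ≤ Order.height (closedPoint R) :=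
    (add_le_add_left (Order.add_one_le_of_lt h1) 1).trans (Order.height_add_one_le hrm)
  have := (WithBot.coe_le_coe.2 h3).trans ((Order.height_le_krullDim _).trans hdim)
  norm_num at this

theorem isField_quotient_minimalPrime_of_trdeg_zero_general
    (R A : Type u) [CommRing R] [IsDomain R] [IsLocalRing R]
    (hdim : ringKrullDim R = 2)
    [CommRing A] [Algebra R A]
    (hmA : Ideal.map (algebraMap R A) (IsLocalRing.maximalIdeal R) = ⊤)
    (π : R) (hπ0 : π ≠ 0)
    (P : Ideal A) (hP : P ∈ (Ideal.span {algebraMap R A π}).minimalPrimes)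
    (htrP : trdegHom (Ideal.quotientMap P (algebraMap R A) le_rfl) = 0) :
    IsField (A ⧸ P) := by
  have hPprime : P.IsPrime := hP.1.1
  have : Algebra.IsAlgebraic (R ⧸ P.comap (algebraMap R A)) (A ⧸ P) :=
    trdegHom_algebraMap_eq_zero_iff.1 htrP
  have hπP : algebraMap R A π ∈ P := hP.1.2 (Ideal.mem_span_singleton_self _)
  have hp0 : ⊥ < P.comap (algebraMap R A) :=
    bot_lt_iff_ne_bot.2 fun h ↦ hπ0 (by simpa [h] using Ideal.mem_comap.2 hπP)
  rw [← Ideal.Quotient.maximal_ideal_iff_isField_quotient]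
  by_contra hPmax
  obtain ⟨Q, hQmax, hPQ⟩ := P.exists_le_maximal hPprime.ne_top
  have hPQ : P < Q := hPQ.lt_of_ne fun h ↦ hPmax (h ▸ hQmax)
  have hQm : Q.comap (algebraMap R A) = IsLocalRing.maximalIdeal R :=
    IsLocalRing.eq_maximalIdeal_of_lt_of_lt hdim.le hp0
      (Ideal.comap_lt_comap_of_isAlgebraic_quotient hPQ)
  apply hQmax.ne_top
  rw [eq_top_iff, ← hmA, Ideal.map_le_iff_le_comap, hQm]

/-- Corollary 3.13: for a Krull domain `A` over a two-dimensional local domain `R` with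
`mA = A` and positive transcendence degree, the quotient by a minimal prime of `πA` with
algebraic residue extension is a field. -/
theorem isField_quotient_minimalPrime_of_trdeg_zero
    (R A : Type u) [CommRing R] [IsDomain R] [IsLocalRing R]
    (hdim : ringKrullDim R = 2)
    [CommRing A] [IsDomain A] [Algebra R A]
    (hinj : Function.Injective (algebraMap R A))
    (hKrull : IsKrullDomain A)
    (hmA : Ideal.map (algebraMap R A) (IsLocalRing.maximalIdeal R) = ⊤)
    (htr : 0 < trdegHom (algebraMap R A))
    (π : R) (hπ0 : π ≠ 0) (hπm : π ∈ IsLocalRing.maximalIdeal R)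
    (P : Ideal A) (hP : P ∈ (Ideal.span {algebraMap R A π}).minimalPrimes)
    (htrP : trdegHom (Ideal.quotientMap P (algebraMap R A) le_rfl) = 0) :
    IsField (A ⧸ P) :=
  isField_quotient_minimalPrime_of_trdeg_zero_general R A hdim hmA π hπ0 P hP htrP
end

section
/- Let R be a two-dimensional regular local ring and {π₁, π₂} a regular system of parameters of R (i.e., π₁, π₂ generate the maximal ideal of R). Let M be a torsion-free R-module such that π₂ is a regular element on M/π₁M (multiplication by π₂ on M/π₁M is injective). Then M is flat over R. -/
universe u

/-! Flatness is tested by the injectivity of `I ⊗ M → M` on ideals `I`. This property is an Oka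
property: it passes from `I + (a)` and `I : a` to `I`, because `I + (a)` is the pushout of
`I ← (I : a) → R`. In a Noetherian ring it therefore suffices to check prime ideals. A prime
avoiding one of the parameters is principal (modulo that parameter the maximal ideal becomes
principal, and Nakayama lifts a generator), and for principal ideals injectivity is just
torsion-freeness. The one remaining prime is the maximal ideal `(π₁, π₂)`, where the regularity of
`π₂` on `M / π₁M`, together with torsion-freeness, kills the Koszul homology that obstructs
injectivity. -/

open LinearMap TensorProduct IsLocalRing

section LocalRing

variable {A : Type*} [CommRing A] [IsLocalRing A] [IsNoetherianRing A]

theorem Ideal.IsPrime.eq_of_le_sup_span_singleton {P N : Ideal A} (hP : P.IsPrime) {π : A}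
    (hπ : π ∈ maximalIdeal A) (hπP : π ∉ P) (hNP : N ≤ P) (hPN : P ≤ N ⊔ Ideal.span {π}) :
    P = N := by
  refine le_antisymm ?_ hNP
  -- `π • p ∈ P` forces `p ∈ P`, so `P ≤ N ⊔ (π) • P` and Nakayama applies
  refine Submodule.le_of_le_smul_of_le_jacobson_bot (IsNoetherian.noetherian P)
    (I := Ideal.span {π}) ?_ fun p hp ↦ ?_
  · rw [jacobson_eq_maximalIdeal ⊥ bot_ne_top, Ideal.span_singleton_le_iff_mem]
    exact hπ
  obtain ⟨n, hn, s, hs, rfl⟩ := Submodule.mem_sup.mp (hPN hp)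
  obtain ⟨c, rfl⟩ := Ideal.mem_span_singleton'.mp hs
  have hc : c ∈ P := (hP.mem_or_mem ((P.add_mem_iff_right (hNP hn)).mp hp)).resolve_right hπP
  rw [mul_comm, ← smul_eq_mul]
  exact Submodule.add_mem_sup hn (Submodule.smul_mem_smul (Ideal.mem_span_singleton_self π) hc)

theorem IsLocalRing.isPrincipalIdealRing_of_isPrincipal_maximalIdeal
    (h : (maximalIdeal A).IsPrincipal) : IsPrincipalIdealRing A := by
  obtain ⟨t, ht⟩ := h
  rw [Ideal.submodule_span_eq] at ht
  refine .of_prime fun Q hQ ↦ ?_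
  by_cases htQ : t ∈ Q
  · rw [show Q = maximalIdeal A from le_antisymm (le_maximalIdeal hQ.ne_top)
      (by rwa [ht, Ideal.span_singleton_le_iff_mem])]
    exact ⟨t, ht⟩
  · rw [hQ.eq_of_le_sup_span_singleton (ht ▸ Ideal.mem_span_singleton_self t) htQ bot_le
      (by rw [bot_sup_eq, ← ht]; exact le_maximalIdeal hQ.ne_top)]
    exact bot_isPrincipal

theorem Ideal.IsPrime.isPrincipal_of_notMem {π π' : A}
    (hm : maximalIdeal A = Ideal.span {π, π'}) {P : Ideal A} (hP : P.IsPrime) (hπP : π ∉ P) :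
    P.IsPrincipal := by
  have hπ : π ∈ maximalIdeal A := hm ▸ Ideal.subset_span (by simp)
  set q := Ideal.Quotient.mk (Ideal.span {π})
  have : Nontrivial (A ⧸ Ideal.span {π}) := Ideal.Quotient.nontrivial_iff.mpr <| by
    rw [Ne, Ideal.span_singleton_eq_top]; exact hπ
  have := IsLocalRing.of_surjective' q Ideal.Quotient.mk_surjective
  have := IsLocalHom.of_surjective q Ideal.Quotient.mk_surjective
  have hmq : maximalIdeal (A ⧸ Ideal.span {π}) = Ideal.span {q π'} := by
    have hmap : maximalIdeal (A ⧸ Ideal.span {π}) = (maximalIdeal A).map q := by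
      ext x
      obtain ⟨x, rfl⟩ := Ideal.Quotient.mk_surjective x
      simp [q, sup_eq_left.mpr ((Ideal.span_singleton_le_iff_mem _).mpr hπ)]
    simp [hmap, hm, Ideal.map_span, Set.image_pair, q]
  obtain ⟨g, hg⟩ := (isPrincipalIdealRing_of_isPrincipal_maximalIdeal ⟨q π', hmq⟩).principal
    (P.map q)
  rw [Ideal.submodule_span_eq] at hg
  obtain ⟨f, hfP, rfl⟩ := (Ideal.mem_map_iff_of_surjective q Ideal.Quotient.mk_surjective).mp
    (hg ▸ Ideal.mem_span_singleton_self _)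
  refine ⟨f, hP.eq_of_le_sup_span_singleton hπ hπP ((Ideal.span_singleton_le_iff_mem _).mpr hfP) ?_⟩
  calc P ≤ (P.map q).comap q := Ideal.le_comap_map
    _ = Ideal.span {f} ⊔ Ideal.span {π} := by
      rw [hg, ← Set.image_singleton, ← Ideal.map_span,
        Ideal.comap_map_of_surjective' q Ideal.Quotient.mk_surjective, Ideal.mk_ker]

end LocalRing

section Tensor

variable {R M : Type*} [CommRing R] [AddCommGroup M] [Module R M]

theorem rTensor_injective_span_singleton {f : R} (hf : ∀ m : M, f • m = 0 → f = 0 ∨ m = 0) :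
    Function.Injective (rTensor M (Ideal.span {f}).subtype) := by
  set f' : Ideal.span {f} := ⟨f, Ideal.mem_span_singleton_self f⟩
  have hsurj : Function.Surjective (TensorProduct.mk R _ M f') := by
    rw [← range_eq_top, eq_top_iff, ← span_tmul_eq_top, Submodule.span_le]
    rintro _ ⟨⟨x, hx⟩, m, rfl⟩
    obtain ⟨r, rfl⟩ := Ideal.mem_span_singleton'.mp hx
    exact ⟨r • m, by rw [mk_apply, tmul_smul, smul_tmul']; rfl⟩
  rw [injective_iff_map_eq_zero]
  intro t ht
  obtain ⟨m, rfl⟩ := hsurj t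
  obtain hf0 | hm0 := hf m (by simpa [f'] using congrArg (TensorProduct.lid R M) ht)
  · simp [show f' = 0 from Subtype.ext hf0]
  · simp [hm0]

theorem rTensor_injective_span_pair {a b : R}
    (hab : ∀ x y : M, a • x + b • y = 0 → ∃ w : M, x = b • w ∧ y = -(a • w)) :
    Function.Injective (rTensor M (Ideal.span {a, b}).subtype) := by
  set I := Ideal.span {a, b}
  set a' : I := ⟨a, Ideal.subset_span (by simp)⟩
  set b' : I := ⟨b, Ideal.subset_span (by simp)⟩
  let ψ : M × M →ₗ[R] I ⊗[R] M := (TensorProduct.mk R I M a').coprod (TensorProduct.mk R I M b')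
  have hsurj : Function.Surjective ψ := by
    rw [← range_eq_top, eq_top_iff, ← span_tmul_eq_top, Submodule.span_le]
    rintro _ ⟨⟨x, hx⟩, m, rfl⟩
    obtain ⟨r, s, rfl⟩ := Ideal.mem_span_pair.mp hx
    refine ⟨(r • m, s • m), ?_⟩
    simp only [ψ, coprod_apply, mk_apply, tmul_smul, smul_tmul', ← add_tmul]
    rfl
  rw [injective_iff_map_eq_zero]
  intro t ht
  obtain ⟨⟨x, y⟩, rfl⟩ := hsurj t
  obtain ⟨w, rfl, rfl⟩ := hab x y (by simpa [ψ, a', b'] using congrArg (TensorProduct.lid R M) ht)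
  have hba : b • a' = a • b' := Subtype.ext (mul_comm b a)
  simp only [ψ, coprod_apply, mk_apply, tmul_neg, tmul_smul, smul_tmul', hba, add_neg_cancel]

theorem rTensor_injective_comp_inl_of_exact {C N Q P : Type*} [AddCommGroup C] [Module R C]
    [AddCommGroup N] [Module R N] [AddCommGroup Q] [Module R Q] [AddCommGroup P] [Module R P]
    {δ : C →ₗ[R] N × Q} {γ : N × Q →ₗ[R] P} (hexact : Function.Exact δ γ)
    (hγ : Function.Surjective γ) (hδ : Function.Injective (rTensor M (snd R N Q ∘ₗ δ))) :
    Function.Injective (rTensor M (γ ∘ₗ inl R N Q)) := by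
  rw [injective_iff_map_eq_zero]
  intro t ht
  obtain ⟨v, hv⟩ := (rTensor_exact M hexact hγ (rTensor M (inl R N Q) t)).mp
    (by rwa [← rTensor_comp_apply])
  have hv0 : v = 0 := hδ <| by
    rw [map_zero, rTensor_comp_apply, hv, ← rTensor_comp_apply, snd_comp_inl, rTensor_zero,
      LinearMap.zero_apply]
  have : rTensor M (fst R N Q) (rTensor M (inl R N Q) t) = t := by
    rw [← rTensor_comp_apply, fst_comp_inl, rTensor_id, id_apply]
  rw [← this, ← hv, hv0, map_zero, map_zero]

theorem Ideal.isOka_rTensor_injective :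
    Ideal.IsOka fun I : Ideal R ↦ Function.Injective (rTensor M I.subtype) where
  top := (LinearEquiv.rTensor M Submodule.topEquiv).injective
  oka {I a} hsup hcolon := by
    set C := I.colon (Ideal.span {a})
    set J := I ⊔ Ideal.span {a}
    have haJ : a ∈ J := Ideal.mem_sup_right (Ideal.mem_span_singleton_self a)
    -- `J` is the pushout of `I ← C → R`, the maps being multiplication by `-a` and inclusion
    let δ : C →ₗ[R] I × R :=
      ((mulRight R (-a)).restrict fun c hc ↦ by
        simpa using I.neg_mem (Ideal.mem_colon_span_singleton.mp hc)).prod C.subtype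
    let γ : I × R →ₗ[R] J := (Submodule.inclusion le_sup_left).coprod (toSpanSingleton R J ⟨a, haJ⟩)
    have hexact : Function.Exact δ γ := by
      intro x
      constructor
      · obtain ⟨i, r⟩ := x
        intro h
        replace h : (i : R) + r * a = 0 := by simpa [γ, Subtype.ext_iff] using h
        have hr : r ∈ C := Ideal.mem_colon_span_singleton.mpr <| by
          rw [eq_neg_of_add_eq_zero_right h]; exact I.neg_mem i.2
        exact ⟨⟨r, hr⟩, Prod.ext (Subtype.ext (show r * -a = i by linear_combination -h)) rfl⟩
      · rintro ⟨c, rfl⟩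
        ext
        simp [δ, γ]
    have hγ : Function.Surjective γ := by
      rintro ⟨j, hj⟩
      obtain ⟨i, hi, s, hs, rfl⟩ := Submodule.mem_sup.mp hj
      obtain ⟨r, rfl⟩ := Ideal.mem_span_singleton'.mp hs
      exact ⟨(⟨i, hi⟩, r), rfl⟩
    have hI : J.subtype ∘ₗ γ ∘ₗ inl R I R = I.subtype := by ext; simp [γ]
    rw [← hI, rTensor_comp]
    exact hsup.comp (rTensor_injective_comp_inl_of_exact hexact hγ hcolon)

theorem rTensor_injective_span_pair_of_torsionFree {a b : R}
    (htf : ∀ (r : R) (m : M), r • m = 0 → r = 0 ∨ m = 0)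
    (hreg : ∀ m : M, (∃ m', b • m = a • m') → ∃ m', m = a • m') :
    Function.Injective (rTensor M (Ideal.span {a, b}).subtype) := by
  by_cases ha : a = 0
  · rw [ha, Ideal.span_insert_zero]
    exact rTensor_injective_span_singleton (htf b)
  refine rTensor_injective_span_pair fun x y hxy ↦ ?_
  obtain ⟨w, rfl⟩ := hreg y ⟨-x, by rw [smul_neg, eq_neg_iff_add_eq_zero, add_comm, hxy]⟩
  have hx : x + b • w = 0 := (htf a _ (by rw [smul_add, smul_comm, hxy])).resolve_left ha
  exact ⟨-w, by rw [smul_neg]; exact eq_neg_of_add_eq_zero_left hx, by rw [smul_neg, neg_neg]⟩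

end Tensor

theorem flat_of_torsionFree_of_regular_param_general
    (R M : Type u) [CommRing R] [IsLocalRing R] [IsNoetherianRing R]
    (π₁ π₂ : R) (hm : IsLocalRing.maximalIdeal R = Ideal.span {π₁, π₂})
    [AddCommGroup M] [Module R M]
    (htf : ∀ (r : R) (m : M), r • m = 0 → r = 0 ∨ m = 0)
    (hreg : ∀ m : M, (∃ m', π₂ • m = π₁ • m') → ∃ m', m = π₁ • m') :
    Module.Flat R M := by
  rw [Module.Flat.iff_rTensor_injective']
  refine Ideal.isOka_rTensor_injective.forall_of_forall_prime
    (fun I hI ↦ exists_maximal_of_wellFoundedGT _ ⟨I, hI⟩) fun P hP ↦ ?_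
  by_cases h₁ : π₁ ∈ P
  · by_cases h₂ : π₂ ∈ P
    · have hPm : P = Ideal.span {π₁, π₂} := hm ▸ le_antisymm (le_maximalIdeal hP.ne_top)
        (hm ▸ Ideal.span_le.mpr (Set.insert_subset h₁ (Set.singleton_subset_iff.mpr h₂)))
      rw [hPm]
      exact rTensor_injective_span_pair_of_torsionFree htf hreg
    · obtain ⟨g, rfl⟩ := hP.isPrincipal_of_notMem (by rw [hm, Set.pair_comm]) h₂
      exact rTensor_injective_span_singleton (htf g)
  · obtain ⟨g, rfl⟩ := hP.isPrincipal_of_notMem hm h₁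
    exact rTensor_injective_span_singleton (htf g)

/-- Lemma 2.9: a torsion-free module over a two-dimensional regular local ring on whose
quotient by one regular parameter the other regular parameter acts regularly is flat. -/
theorem flat_of_torsionFree_of_regular_param
    (R M : Type u) [CommRing R] [IsLocalRing R] [IsNoetherianRing R]
    (hdim : ringKrullDim R = 2)
    (π₁ π₂ : R) (hm : IsLocalRing.maximalIdeal R = Ideal.span {π₁, π₂})
    [AddCommGroup M] [Module R M]
    (htf : ∀ (r : R) (m : M), r • m = 0 → r = 0 ∨ m = 0)
    (hreg : ∀ m : M, (∃ m', π₂ • m = π₁ • m') → ∃ m', m = π₁ • m') :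
    Module.Flat R M :=
  flat_of_torsionFree_of_regular_param_general R M π₁ π₂ hm htf hreg
end

section
/- Let D be an integral domain and suppose there exists a nonzero element t in D such that (I) D[t⁻¹] is a Noetherian ring, (II) tD is a maximal ideal of D, and (III) ht(tD) = 1 (equivalently, ⋂_{n≥1} tⁿD = (0)). Then D is a Noetherian ring. -/
universe u

open Ideal

theorem idealHeight_eq_height {A : Type*} [CommRing A] (I : Ideal A) :
    idealHeight I = I.height := by
  apply le_antisymm
  · rw [I.height_eq_inf_minimalPrimes]
    refine le_iInf₂ fun J hJ => ?_
    let P : PrimeSpectrum A := ⟨J, hJ.isPrime⟩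
    calc idealHeight I ≤ Order.height P := iInf₂_le P hJ.1.2
      _ = J.height := (PrimeSpectrum.height_eq_orderHeight P).symm
  · refine le_iInf₂ fun P hP => ?_
    calc I.height ≤ P.asIdeal.height := height_mono hP
      _ = Order.height P := PrimeSpectrum.height_eq_orderHeight P

namespace Ideal

variable {R : Type*} [CommRing R]

theorem eq_bot_of_lt_of_height_le_one [IsDomain R] {P Q : Ideal R} [Q.IsPrime] [P.IsPrime]
    (hQP : Q < P) (hP : P.height ≤ 1) : Q = ⊥ := by
  have : P.FiniteHeight := ⟨Or.inr (ne_top_of_le_ne_top ENat.one_ne_top hP)⟩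
  rw [← height_eq_zero_iff_eq_bot, ← Order.lt_one_iff]
  exact (height_strict_mono_of_isPrime_of_isPrime hQP).trans_le hP

theorem mem_iInf_span_pow_iff {t x : R} : x ∈ ⨅ n : ℕ, span {t ^ n} ↔ ∀ n, t ^ n ∣ x := by
  simp only [Submodule.mem_iInf, mem_span_singleton]

theorem isPrime_iInf_span_pow [IsDomain R] {p : R} (hp : Prime p) :
    (⨅ n : ℕ, span {p ^ n}).IsPrime := by
  refine ⟨fun htop => ?_, fun {a b} hab => ?_⟩
  · have hdvd := mem_iInf_span_pow_iff.mp (htop ▸ Submodule.mem_top (x := (1 : R))) 1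
    exact hp.not_isUnit (isUnit_of_dvd_one (by simpa using hdvd))
  · simp only [mem_iInf_span_pow_iff, ← FiniteMultiplicity.not_iff_forall] at hab ⊢
    by_contra! h
    exact hab (hp.finiteMultiplicity_mul h.1 h.2)

theorem iInf_span_pow_eq_bot [IsDomain R] {p : R} (hp : Prime p) (h : (span {p}).height ≤ 1) :
    ⨅ n : ℕ, span {p ^ n} = ⊥ := by
  have := isPrime_iInf_span_pow hp
  have := (span_singleton_prime hp.ne_zero).mpr hp
  refine eq_bot_of_lt_of_height_le_one (SetLike.lt_iff_le_and_exists.mpr ⟨?_, p, ?_, ?_⟩) h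
  · simpa using iInf_le (fun n : ℕ => span {p ^ n}) 1
  · exact mem_span_singleton_self p
  · intro hp_mem
    have hdvd : p ^ 2 ∣ p ^ 1 := by simpa using mem_iInf_span_pow_iff.mp hp_mem 2
    simpa using (pow_dvd_pow_iff hp.ne_zero hp.not_isUnit).mp hdvd

theorem exists_le_span_pow_not_le_succ {t : R} {I : Ideal R} (h : ¬I ≤ ⨅ n : ℕ, span {t ^ n}) :
    ∃ n, I ≤ span {t ^ n} ∧ ¬I ≤ span {t ^ (n + 1)} := by
  by_contra! H
  exact h (le_iInf fun n => n.rec (by simp) H)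

theorem eq_span_singleton_mul_colon {x : R} {I : Ideal R} (h : I ≤ span {x}) :
    I = span {x} * I.colon {x} := by
  refine le_antisymm (fun a ha => ?_) (span_singleton_mul_le_iff.mpr fun c hc => ?_)
  · obtain ⟨b, rfl⟩ := mem_span_singleton.mp (h ha)
    have hb : b ∈ I.colon {x} := Submodule.mem_colon_singleton.mpr (by simpa [mul_comm] using ha)
    exact mem_span_singleton_mul.mpr ⟨b, hb, rfl⟩
  · simpa [mul_comm] using Submodule.mem_colon_singleton.mp hc

theorem colon_not_le_of_not_le_span_singleton_mul {x y : R} {I : Ideal R} (h : I ≤ span {x})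
    (h' : ¬I ≤ span {x * y}) : ¬I.colon {x} ≤ span {y} := fun hle => h' <|
  calc I = span {x} * I.colon {x} := eq_span_singleton_mul_colon h
    _ ≤ span {x} * span {y} := mul_mono_right hle
    _ = span {x * y} := span_singleton_mul_span_singleton x y

theorem fg_of_span_singleton_sup_eq_top {t : R} [IsNoetherianRing (Localization.Away t)]
    {I : Ideal R} (h : span {t} ⊔ I = ⊤) : I.FG := by
  refine fg_of_localizationSpan (insert t (I : Set R)) ?_ fun ⟨g, hg⟩ => ?_
  · rw [span_insert, span_eq, h]
  · rcases hg with rfl | hgI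
    · exact IsNoetherian.noetherian _
    · rw [eq_top_of_isUnit_mem _ (mem_map_of_mem _ hgI) (IsLocalization.Away.algebraMap_isUnit g)]
      exact ⟨{1}, by simp⟩

end Ideal

/-- Lemma 2.4: a Noetherian criterion for an integral domain. -/
theorem isNoetherianRing_of_localization_away
    (D : Type u) [CommRing D] [IsDomain D]
    (t : D) (ht0 : t ≠ 0)
    (hI : IsNoetherianRing (Localization.Away t))
    (hII : (Ideal.span {t}).IsMaximal)
    (hIII : idealHeight (Ideal.span {t}) = 1) :
    IsNoetherianRing D := by
  have ht : Prime t := (span_singleton_prime ht0).mp hII.isPrime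
  have hinter := iInf_span_pow_eq_bot ht (by rw [← idealHeight_eq_height, hIII])
  refine (isNoetherianRing_iff_ideal_fg D).mpr fun I => ?_
  obtain rfl | hI0 := eq_or_ne I ⊥
  · exact Submodule.fg_bot
  obtain ⟨n, hle, hnle⟩ := exists_le_span_pow_not_le_succ (I := I) (by rwa [hinter, le_bot_iff])
  rw [pow_succ] at hnle
  have hcolon : span {t} ⊔ I.colon {t ^ n} = ⊤ := codisjoint_iff.mp <|
    (isMaximal_def.mp hII).not_le_iff_codisjoint.mp
      (colon_not_le_of_not_le_span_singleton_mul hle hnle)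
  rw [eq_span_singleton_mul_colon hle]
  exact (Submodule.fg_span_singleton _).mul (fg_of_span_singleton_sup_eq_top hcolon)
end
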